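/- arXiv:2409.07699 — 3 statements merged into one kernel-verified Lean document; each statement's English description precedes it below -/
import Mathlib

section
/- For all real numbers a, b, c with a ≠ 0 and b ≠ 0, the ℝ-linear map P on H_ss determined on the basis by P(1) = 0, P(e₁) = a − a e₁ + c e₂ + (c − a²/b) e₃, P(e₂) = b − b e₁ + (bc/a) e₂ + (bc/a − a) e₃, P(e₃) = −b + b e₁ − (bc/a) e₂ + (a − bc/a) e₃ is a Rota-Baxter operator of weight 0 on H_ss. -/
/-!
Writing `φ x = a x₁ + b x₂ - b x₃` for `x = x₀ + x₁e₁ + x₂e₂ + x₃e₃` and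
`u = 1 - e₁ + (c/a) e₂ + (c/a - a/b) e₃`, the operator is the rank-one map `P x = φ(x) u`.
For such a map the weight-zero Rota-Baxter identity reduces to
`φ(x) φ(y) u² = (φ(u y) φ(x) + φ(x u) φ(y)) u`, and here `u² = 2u`, `φ(u y) = 2 φ(y)` and
`φ(x u) = 0`.
-/

noncomputable section

/-- The split semi-quaternion algebra `H_ss`, realized as the quaternion algebra over `ℝ`
with `e₁² = 1`, `e₂² = 0` (so that `e₃ = e₁e₂` satisfies `e₃² = 0`,
`e₁e₂ = e₃ = -e₂e₁`, `e₂e₃ = 0 = e₃e₂`, `e₃e₁ = -e₂ = -e₁e₃`). -/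
abbrev Hss : Type := QuaternionAlgebra ℝ 1 0 0

/-- The basis element `e₁`. -/
def e1 : Hss := ⟨0, 1, 0, 0⟩

/-- The basis element `e₂`. -/
def e2 : Hss := ⟨0, 0, 1, 0⟩

/-- The basis element `e₃`. -/
def e3 : Hss := ⟨0, 0, 0, 1⟩

/-- `P` is a Rota-Baxter operator of weight `l` on `H_ss`. -/
def IsRotaBaxter (l : ℝ) (P : Hss →ₗ[ℝ] Hss) : Prop :=
  ∀ x y : Hss, P x * P y = P (P x * y) + P (x * P y) + l • P (x * y)

open QuaternionAlgebra

theorem rankOne_rotaBaxter_identity {R A : Type*} [CommSemiring R] [Semiring A] [Algebra R A]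
    {P : A → A} (φ : A →ₗ[R] R) (u : A) (κ μ : R) (hP : ∀ x, P x = φ x • u)
    (hu : u * u = (κ + μ) • u) (hl : ∀ y, φ (u * y) = κ * φ y) (hr : ∀ x, φ (x * u) = μ * φ x)
    (x y : A) :
    P x * P y = P (P x * y) + P (x * P y) := by
  simp only [hP, hu, smul_mul_assoc, mul_smul_comm, map_smul, hl, hr,
    smul_smul, ← add_smul, smul_eq_mul]
  congr 1
  ring

namespace Hss

def imFunctional (α β γ : ℝ) : Hss →ₗ[ℝ] ℝ :=
  α • imIₗ 1 0 0 + β • imJₗ 1 0 0 + γ • imKₗ 1 0 0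

theorem imFunctional_apply (α β γ : ℝ) (x : Hss) :
    imFunctional α β γ x = α * x.imI + β * x.imJ + γ * x.imK :=
  rfl

theorem eq_re_smul_one_add (x : Hss) : x = x.re • 1 + x.imI • e1 + x.imJ • e2 + x.imK • e3 := by
  ext <;> simp [e1, e2, e3]

theorem apply_eq_imFunctional_smul {P : Hss →ₗ[ℝ] Hss} {u : Hss} {α β γ : ℝ} (h0 : P 1 = 0)
    (h1 : P e1 = α • u) (h2 : P e2 = β • u) (h3 : P e3 = γ • u) (x : Hss) :
    P x = imFunctional α β γ x • u := by
  conv_lhs => rw [eq_re_smul_one_add x]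
  simp only [map_add, map_smul, h0, h1, h2, h3, smul_zero, zero_add, smul_smul, ← add_smul,
    imFunctional_apply]
  ring_nf

variable (s t : ℝ)

theorem mk_one_neg_one_mul_self :
    (⟨1, -1, s, t⟩ : Hss) * ⟨1, -1, s, t⟩ = (2 : ℝ) • (⟨1, -1, s, t⟩ : Hss) := by
  ext <;> simp <;> ring

variable {a b : ℝ} (hst : b * (s - t) = a)
include hst

theorem imFunctional_mk_one_neg_one_mul (y : Hss) :
    imFunctional a b (-b) (⟨1, -1, s, t⟩ * y) = 2 * imFunctional a b (-b) y := by
  subst hst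
  simp only [imFunctional_apply, imI_mul, imJ_mul, imK_mul]
  ring

theorem imFunctional_mul_mk_one_neg_one (x : Hss) :
    imFunctional a b (-b) (x * ⟨1, -1, s, t⟩) = 0 * imFunctional a b (-b) x := by
  subst hst
  simp only [imFunctional_apply, imI_mul, imJ_mul, imK_mul]
  ring

end Hss

theorem rb_w0_family8 (a b c : ℝ) (ha : a ≠ 0) (hb : b ≠ 0)
    (P : Hss →ₗ[ℝ] Hss)
    (h0 : P 1 = 0)
    (h1 : P e1 = (a) • (1 : Hss) - (a) • e1 + (c) • e2 + (c - a^2/b) • e3)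
    (h2 : P e2 = (b) • (1 : Hss) - (b) • e1 + (b*c/a) • e2 + (b*c/a - a) • e3)
    (h3 : P e3 = (-b) • (1 : Hss) + (b) • e1 - (b*c/a) • e2 + (a - b*c/a) • e3) :
    IsRotaBaxter 0 P := by
  set u : Hss := ⟨1, -1, c / a, c / a - a / b⟩
  have hst : b * (c / a - (c / a - a / b)) = a := by field_simp; ring
  have hP : ∀ x, P x = Hss.imFunctional a b (-b) x • u := by
    refine Hss.apply_eq_imFunctional_smul h0 (h1.trans ?_) (h2.trans ?_) (h3.trans ?_) <;>
      ext <;> simp [u, e1, e2, e3] <;> grind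
  intro x y
  rw [zero_smul, add_zero]
  exact rankOne_rotaBaxter_identity _ u 2 0 hP
    (by rw [add_zero]; exact Hss.mk_one_neg_one_mul_self _ _)
    (Hss.imFunctional_mk_one_neg_one_mul _ _ hst) (Hss.imFunctional_mul_mk_one_neg_one _ _ hst) x y
end
end

section
/- Let λ be a nonzero real number. For all real numbers a, b with λ + b ≠ 0, the ℝ-linear map P on H_ss determined on the basis by P(1) = −λ, P(e₁) = λ + a e₂ + (ab/(λ+b)) e₃, P(e₂) = −(λ+b) e₂ − b e₃, P(e₃) = (λ+b) e₂ + b e₃ is a Rota-Baxter operator of weight λ on H_ss. (Under the identification e₁ = g, e₂ = ν, e₃ = gν, this is the operator (S7) of Ma et al. on the Sweedler algebra.) -/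
noncomputable section

/-!
Write `w = (l + b) e₂ + b e₃`. Then `Hss = A₁ ⊕ A₂` with `A₁ = span {1, w}` and
`A₂ = span {(l + b)(1 + e₁) + a e₂, e₂ + e₃}`, both closed under multiplication, and `P` is `-l`
on `A₁` and `0` on `A₂`, i.e. `-l` times the projection onto `A₁` along `A₂`. For any splitting of
an algebra into two multiplicatively closed submodules, `-l` times such a projection is a
Rota-Baxter operator of weight `l`: writing `x = x₁ + x₂`, `y = y₁ + y₂`, both sides of the
identity reduce to `l² x₁ y₁`.
-/

section RotaBaxter

variable {R A : Type*} [CommRing R] [Ring A] [Algebra R A]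

theorem rotaBaxter_identity_of_sup_eq_top {l : R} {P : A →ₗ[R] A} {A₁ A₂ : Submodule R A}
    (hA₁ : A₁ * A₁ ≤ A₁) (hA₂ : A₂ * A₂ ≤ A₂) (hsup : A₁ ⊔ A₂ = ⊤)
    (hP₁ : ∀ x ∈ A₁, P x = -l • x) (hP₂ : A₂ ≤ LinearMap.ker P) (x y : A) :
    P x * P y = P (P x * y) + P (x * P y) + l • P (x * y) := by
  obtain ⟨x₁, hx₁, x₂, hx₂, rfl⟩ := Submodule.mem_sup.1 (hsup ▸ Submodule.mem_top : x ∈ A₁ ⊔ A₂)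
  obtain ⟨y₁, hy₁, y₂, hy₂, rfl⟩ := Submodule.mem_sup.1 (hsup ▸ Submodule.mem_top : y ∈ A₁ ⊔ A₂)
  have h₁₁ : P (x₁ * y₁) = -l • (x₁ * y₁) := hP₁ _ (hA₁ (Submodule.mul_mem_mul hx₁ hy₁))
  have h₂₂ : P (x₂ * y₂) = 0 := hP₂ (hA₂ (Submodule.mul_mem_mul hx₂ hy₂))
  simp only [map_add, hP₁ _ hx₁, hP₁ _ hy₁, LinearMap.mem_ker.1 (hP₂ hx₂),
    LinearMap.mem_ker.1 (hP₂ hy₂), add_zero, mul_add, add_mul, smul_mul_assoc, mul_smul_comm,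
    map_smul, h₁₁, h₂₂]
  module

theorem span_pair_mul_le {u v : A} (huu : u * u ∈ Submodule.span R {u, v})
    (huv : u * v ∈ Submodule.span R {u, v}) (hvu : v * u ∈ Submodule.span R {u, v})
    (hvv : v * v ∈ Submodule.span R {u, v}) :
    Submodule.span R {u, v} * Submodule.span R {u, v} ≤ Submodule.span R {u, v} := by
  rw [Submodule.span_mul_span, Submodule.span_le]
  rintro _ ⟨p, hp, q, hq, rfl⟩
  rcases hp with rfl | rfl <;> rcases hq with rfl | rfl <;> assumption

end RotaBaxter

section Hss

@[simp] lemma e1_mul_e1 : e1 * e1 = 1 := by ext <;> simp [e1]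
@[simp] lemma e2_mul_e2 : e2 * e2 = 0 := by ext <;> simp [e2]
@[simp] lemma e3_mul_e3 : e3 * e3 = 0 := by ext <;> simp [e3]
@[simp] lemma e1_mul_e2 : e1 * e2 = e3 := by ext <;> simp [e1, e2, e3]
@[simp] lemma e2_mul_e1 : e2 * e1 = -e3 := by ext <;> simp [e1, e2, e3]
@[simp] lemma e1_mul_e3 : e1 * e3 = e2 := by ext <;> simp [e1, e2, e3]
@[simp] lemma e3_mul_e1 : e3 * e1 = -e2 := by ext <;> simp [e1, e2, e3]
@[simp] lemma e2_mul_e3 : e2 * e3 = 0 := by ext <;> simp [e2, e3]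
@[simp] lemma e3_mul_e2 : e3 * e2 = 0 := by ext <;> simp [e2, e3]

variable (l a b : ℝ)

def s7Image : Submodule ℝ Hss := Submodule.span ℝ {1, (l + b) • e2 + b • e3}

def s7Kernel : Submodule ℝ Hss := Submodule.span ℝ {(l + b) • (1 + e1) + a • e2, e2 + e3}

theorem s7Image_mul_le : s7Image l b * s7Image l b ≤ s7Image l b := by
  refine span_pair_mul_le ?_ ?_ ?_ ?_ <;> rw [Submodule.mem_span_pair] <;>
    simp only [mul_add, add_mul, smul_mul_assoc, mul_smul_comm, one_mul, mul_one, e2_mul_e2,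
      e2_mul_e3, e3_mul_e2, e3_mul_e3]
  exacts [⟨1, 0, by module⟩, ⟨0, 1, by module⟩, ⟨0, 1, by module⟩, ⟨0, 0, by module⟩]

theorem s7Kernel_mul_le : s7Kernel l a b * s7Kernel l a b ≤ s7Kernel l a b := by
  refine span_pair_mul_le ?_ ?_ ?_ ?_ <;> rw [Submodule.mem_span_pair] <;>
    simp only [mul_add, add_mul, smul_mul_assoc, mul_smul_comm, one_mul, mul_one, e1_mul_e1,
      e1_mul_e2, e2_mul_e1, e1_mul_e3, e3_mul_e1, e2_mul_e2, e2_mul_e3, e3_mul_e2, e3_mul_e3]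
  exacts [⟨2 * (l + b), 0, by module⟩, ⟨0, 2 * (l + b), by module⟩, ⟨0, 0, by module⟩,
    ⟨0, 0, by module⟩]

variable {l b} in
theorem s7Image_sup_s7Kernel (hl : l ≠ 0) (hb : l + b ≠ 0) : s7Image l b ⊔ s7Kernel l a b = ⊤ := by
  refine eq_top_iff.2 fun v _ ↦ Submodule.mem_sup.2 ?_
  set t := (v.imJ - v.imK - a * v.imI / (l + b)) / l
  refine ⟨(v.re - v.imI) • 1 + t • ((l + b) • e2 + b • e3),
    Submodule.mem_span_pair.2 ⟨_, _, rfl⟩,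
    (v.imI / (l + b)) • ((l + b) • (1 + e1) + a • e2) + (v.imK - t * b) • (e2 + e3),
    Submodule.mem_span_pair.2 ⟨_, _, rfl⟩, ?_⟩
  ext <;> simp [e1, e2, e3, t] <;> field_simp <;> ring

variable {l a b} {P : Hss →ₗ[ℝ] Hss}

theorem apply_of_mem_s7Image (h0 : P 1 = -l • 1)
    (h2 : P e2 = -(l + b) • e2 - b • e3) (h3 : P e3 = (l + b) • e2 + b • e3) :
    ∀ x ∈ s7Image l b, P x = -l • x := by
  refine fun x hx ↦ LinearMap.eqOn_span (g := -l • LinearMap.id) ?_ hx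
  rintro _ (rfl | rfl)
  · simpa using h0
  · simp only [map_add, map_smul, h2, h3, LinearMap.smul_apply, LinearMap.id_apply]
    module

theorem s7Kernel_le_ker (hb : l + b ≠ 0) (h0 : P 1 = -l • 1)
    (h1 : P e1 = l • 1 + a • e2 + (a * b / (l + b)) • e3)
    (h2 : P e2 = -(l + b) • e2 - b • e3) (h3 : P e3 = (l + b) • e2 + b • e3) :
    s7Kernel l a b ≤ LinearMap.ker P := by
  refine Submodule.span_le.2 ?_
  rintro _ (rfl | rfl) <;>
    simp only [SetLike.mem_coe, LinearMap.mem_ker, map_add, map_smul, h0, h1, h2, h3]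
  · match_scalars <;> field_simp <;> ring
  · module

end Hss

theorem rb_nonzero_weight_S7 (l : ℝ) (hl : l ≠ 0) (a b : ℝ) (hb : l + b ≠ 0)
    (P : Hss →ₗ[ℝ] Hss)
    (h0 : P 1 = (-l) • (1 : Hss))
    (h1 : P e1 = (l) • (1 : Hss) + (a) • e2 + (a*b/(l + b)) • e3)
    (h2 : P e2 = (-(l + b)) • e2 - (b) • e3)
    (h3 : P e3 = (l + b) • e2 + (b) • e3) :
    IsRotaBaxter l P := by
  intro x y
  exact rotaBaxter_identity_of_sup_eq_top (s7Image_mul_le l b) (s7Kernel_mul_le l a b)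
    (s7Image_sup_s7Kernel a hl hb) (apply_of_mem_s7Image h0 h2 h3) (s7Kernel_le_ker hb h0 h1 h2 h3)
    x y
end
end

section
/- Let λ be a nonzero real number. For all real numbers a, b, c with c ≠ 0, the ℝ-linear map P on H_ss determined on the basis by P(1) = −λ, P(e₁) = (λ+a) + a e₁ − ((λ+a)(λ+a+b)/c) e₂ + ((λ+a)(λ+b)/c) e₃, P(e₂) = c + c e₁ − (2λ+a+b) e₂ + (λ+b) e₃, P(e₃) = c + c e₁ − (λ+a+b) e₂ + b e₃ is a Rota-Baxter operator of weight λ on H_ss. (Under the identification e₁ = g, e₂ = ν, e₃ = gν, this is the operator (S6) of Ma et al. on the Sweedler algebra.) -/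
noncomputable section

/-! A linear map is determined by its values on the basis `1, e₁, e₂, e₃`, so `P` acts by an
explicit formula in quaternion coordinates. The Rota-Baxter identity then splits into four
rational identities in the coordinates of `x` and `y`, which become polynomial after clearing
the denominator `c`. -/

namespace Hss

theorem eq_sum_basis (x : Hss) : x = x.re • (1 : Hss) + x.imI • e1 + x.imJ • e2 + x.imK • e3 := by
  ext <;> simp [e1, e2, e3]

theorem linearMap_apply {M : Type*} [AddCommGroup M] [Module ℝ M] (f : Hss →ₗ[ℝ] M) (x : Hss) :
    f x = x.re • f 1 + x.imI • f e1 + x.imJ • f e2 + x.imK • f e3 := by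
  conv_lhs => rw [eq_sum_basis x]
  simp only [map_add, map_smul]

end Hss

/-- The operator (S6) in the coordinates `(re, imI, imJ, imK)` of `H_ss`. -/
def s6 (l a b c : ℝ) (x : Hss) : Hss :=
  ⟨-l * x.re + (l + a) * x.imI + c * x.imJ + c * x.imK,
    a * x.imI + c * x.imJ + c * x.imK,
    -((l + a) * (l + a + b) / c) * x.imI - (2 * l + a + b) * x.imJ - (l + a + b) * x.imK,
    ((l + a) * (l + b) / c) * x.imI + (l + b) * x.imJ + b * x.imK⟩

theorem s6_rotaBaxter {l a b c : ℝ} (hc : c ≠ 0) (x y : Hss) :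
    s6 l a b c x * s6 l a b c y =
      s6 l a b c (s6 l a b c x * y) + s6 l a b c (x * s6 l a b c y) + l • s6 l a b c (x * y) := by
  ext <;>
    simp only [s6, QuaternionAlgebra.re_mul, QuaternionAlgebra.imI_mul, QuaternionAlgebra.imJ_mul,
      QuaternionAlgebra.imK_mul, QuaternionAlgebra.re_add, QuaternionAlgebra.imI_add,
      QuaternionAlgebra.imJ_add, QuaternionAlgebra.imK_add, QuaternionAlgebra.re_smul,
      QuaternionAlgebra.imI_smul, QuaternionAlgebra.imJ_smul, QuaternionAlgebra.imK_smul,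
      smul_eq_mul] <;>
    field_simp <;> ring

theorem coe_eq_s6_of_basis {l a b c : ℝ} {P : Hss →ₗ[ℝ] Hss}
    (h0 : P 1 = (-l) • (1 : Hss))
    (h1 : P e1 = (l + a) • (1 : Hss) + a • e1 - ((l + a) * (l + a + b) / c) • e2 +
      ((l + a) * (l + b) / c) • e3)
    (h2 : P e2 = c • (1 : Hss) + c • e1 - (2 * l + a + b) • e2 + (l + b) • e3)
    (h3 : P e3 = c • (1 : Hss) + c • e1 - (l + a + b) • e2 + b • e3) :
    ⇑P = s6 l a b c := by
  funext x
  rw [Hss.linearMap_apply, h0, h1, h2, h3]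
  ext <;>
    simp only [s6, e1, e2, e3, QuaternionAlgebra.re_add, QuaternionAlgebra.imI_add,
      QuaternionAlgebra.imJ_add, QuaternionAlgebra.imK_add, QuaternionAlgebra.re_sub,
      QuaternionAlgebra.imI_sub, QuaternionAlgebra.imJ_sub, QuaternionAlgebra.imK_sub,
      QuaternionAlgebra.re_smul, QuaternionAlgebra.imI_smul, QuaternionAlgebra.imJ_smul,
      QuaternionAlgebra.imK_smul, QuaternionAlgebra.re_one, QuaternionAlgebra.imI_one,
      QuaternionAlgebra.imJ_one, QuaternionAlgebra.imK_one, smul_eq_mul] <;>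
    ring

theorem rb_nonzero_weight_S6_general (l : ℝ) (a b c : ℝ) (hc : c ≠ 0)
    (P : Hss →ₗ[ℝ] Hss)
    (h0 : P 1 = (-l) • (1 : Hss))
    (h1 : P e1 = (l + a) • (1 : Hss) + (a) • e1 - ((l + a)*(l + a + b)/c) • e2 + ((l + a)*(l + b)/c) • e3)
    (h2 : P e2 = (c) • (1 : Hss) + (c) • e1 - (2*l + a + b) • e2 + (l + b) • e3)
    (h3 : P e3 = (c) • (1 : Hss) + (c) • e1 - (l + a + b) • e2 + (b) • e3) :
    IsRotaBaxter l P := by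
  intro x y
  rw [coe_eq_s6_of_basis h0 h1 h2 h3]
  exact s6_rotaBaxter hc x y

theorem rb_nonzero_weight_S6 (l : ℝ) (hl : l ≠ 0) (a b c : ℝ) (hc : c ≠ 0)
    (P : Hss →ₗ[ℝ] Hss)
    (h0 : P 1 = (-l) • (1 : Hss))
    (h1 : P e1 = (l + a) • (1 : Hss) + (a) • e1 - ((l + a)*(l + a + b)/c) • e2 + ((l + a)*(l + b)/c) • e3)
    (h2 : P e2 = (c) • (1 : Hss) + (c) • e1 - (2*l + a + b) • e2 + (l + b) • e3)
    (h3 : P e3 = (c) • (1 : Hss) + (c) • e1 - (l + a + b) • e2 + (b) • e3) :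
    IsRotaBaxter l P :=
  rb_nonzero_weight_S6_general l a b c hc P h0 h1 h2 h3
end
end
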